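/- arXiv:1607.06897 — 4 statements merged into one kernel-verified Lean document; each statement's English description precedes it below -/
import Mathlib

section
/- Let i, j be integers with 1 ≤ i < j, let m be any integer with 0 ≤ m ≤ 2^i, and let k be an integer with 0 ≤ k ≤ 2^j. Then cos(k · mπ/2^i) = cos((2^j − k) · mπ/2^i); equivalently, the Chebyshev polynomials satisfy T_k(x) = T_{2^j − k}(x) at every CGL node x = cos(mπ/2^i) of level i. Consequently, the hierarchical basis function T̃_k = T_k − T_{2^j − k} associated with a new index k of level j vanishes at all CGL grid points of every lower level i < j. -/
open Real

/-- For levels `1 ≤ i < j`, at every CGL node `x = cos (mπ/2^i)` of level `i`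
(`0 ≤ m ≤ 2^i`) and for every `0 ≤ k ≤ 2^j`, one has
`cos (k · mπ/2^i) = cos ((2^j − k) · mπ/2^i)`; equivalently the Chebyshev
polynomials satisfy `T_k x = T_{2^j − k} x`. Hence the hierarchical basis
function `T̃_k = T_k − T_{2^j−k}` of a new index `k` of level `j` vanishes at
all CGL grid points of every lower level `i < j`. -/
theorem chebyshev_hierarchical_symmetry
    (i j : ℕ) (hi : 1 ≤ i) (hij : i < j) (m : ℕ) (hm : m ≤ 2 ^ i)
    (k : ℕ) (hk : k ≤ 2 ^ j) :
    Real.cos ((k : ℝ) * ((m : ℝ) * π / 2 ^ i))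
        = Real.cos (((2 ^ j - k : ℕ) : ℝ) * ((m : ℝ) * π / 2 ^ i)) ∧
      (Polynomial.Chebyshev.T ℝ (k : ℤ)).eval (Real.cos ((m : ℝ) * π / 2 ^ i))
        = (Polynomial.Chebyshev.T ℝ ((2 : ℤ) ^ j - (k : ℤ))).eval
            (Real.cos ((m : ℝ) * π / 2 ^ i)) ∧
      ((Polynomial.Chebyshev.T ℝ (k : ℤ))
          - (Polynomial.Chebyshev.T ℝ ((2 : ℤ) ^ j - (k : ℤ)))).eval
            (Real.cos ((m : ℝ) * π / 2 ^ i)) = 0 := by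
  have h2i : (2 : ℝ) ^ i ≠ 0 := by positivity
  -- key angle identity
  have key : Real.cos ((k : ℝ) * ((m : ℝ) * π / 2 ^ i))
      = Real.cos ((2 ^ j - (k : ℝ)) * ((m : ℝ) * π / 2 ^ i)) := by
    have hji2 : (2 : ℝ) ^ j = 2 ^ (j - i - 1) * 2 * 2 ^ i := by
      rw [← pow_succ, ← pow_add]
      congr 1
      omega
    have this : (2 ^ j - (k : ℝ)) * ((m : ℝ) * π / 2 ^ i)
        = (((2 ^ (j - i - 1) * m : ℕ) : ℤ) : ℝ) * (2 * π)
          - (k : ℝ) * ((m : ℝ) * π / 2 ^ i) := by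
      push_cast
      field_simp
      rw [hji2]
      ring
    rw [this, Real.cos_int_mul_two_pi_sub]
  have hcast : ((2 ^ j - k : ℕ) : ℝ) = 2 ^ j - (k : ℝ) := by
    push_cast [hk]; ring
  refine ⟨by rw [hcast]; exact key, ?_, ?_⟩
  · rw [Polynomial.Chebyshev.T_real_cos, Polynomial.Chebyshev.T_real_cos]
    push_cast
    rw [key]
  · rw [Polynomial.eval_sub, Polynomial.Chebyshev.T_real_cos,
      Polynomial.Chebyshev.T_real_cos]
    push_cast
    rw [key]
    ring
end

section
/- Smolyak combination identity: let R be a commutative ring, let q ≥ 1 and p ≥ q be integers, and for each l ∈ {1,…,q} let a_l : ℕ → R with a_l(0) = 0; set d_l(i) = a_l(i) − a_l(i−1) for i ≥ 1. Then Σ_{i ∈ ℤ_{≥1}^q, q ≤ i_1+⋯+i_q ≤ p} ∏_{l=1}^q d_l(i_l) = Σ_{i ∈ ℤ_{≥1}^q, p−q < i_1+⋯+i_q ≤ p} (−1)^{p − (i_1+⋯+i_q)} · C(q−1, p − (i_1+⋯+i_q)) · ∏_{l=1}^q a_l(i_l), where C(n,r) is the binomial coefficient. (This is the scalar identity underlying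 the equivalence of the two formulas (3.3) and (3.4) for the sparse grid interpolation operator I_q^p, with a_l(i) playing the role of the level-i one-dimensional operator I^i and d_l(i) the role of the difference operator Δ^i = I^i − I^{i−1}.) -/
open Finset

private lemma alt_partial_sum (R : Type*) [CommRing R] (n r : ℕ) (hn : 1 ≤ n) :
    ∑ k ∈ range (r + 1), (-1 : R) ^ k * (n.choose k : R)
      = (-1 : R) ^ r * ((n - 1).choose r : R) := by
  obtain ⟨n, rfl⟩ : ∃ m, n = m + 1 := ⟨n - 1, by omega⟩
  simp only [Nat.add_sub_cancel]
  induction r with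
  | zero => simp
  | succ r ih =>
    rw [sum_range_succ, ih, Nat.choose_succ_succ (n := n) (k := r)]
    push_cast
    ring

private lemma coeff_lemma (R : Type*) [CommRing R] (q p m : ℕ) (hq : 1 ≤ q) (hpq : q ≤ p)
    (hm : q ≤ m) :
    ∑ k ∈ range (q + 1), (if q ≤ m + k ∧ m + k ≤ p then (-1 : R) ^ k * (q.choose k : R) else 0)
      = if p - q < m ∧ m ≤ p then (-1 : R) ^ (p - m) * ((q - 1).choose (p - m) : R) else 0 := by
  have h1 : ∀ k, (q ≤ m + k ∧ m + k ≤ p) ↔ m + k ≤ p := fun k => by omega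
  simp only [h1]
  by_cases hmp : m ≤ p
  · by_cases h2 : q ≤ p - m
    · have h3 : ∀ k ∈ range (q + 1),
          (if m + k ≤ p then (-1 : R) ^ k * (q.choose k : R) else 0)
            = (-1 : R) ^ k * (q.choose k : R) := by
        intro k hk
        rw [if_pos]
        simp only [mem_range] at hk
        omega
      rw [sum_congr rfl h3]
      have hz : (∑ k ∈ range (q + 1), (-1 : ℤ) ^ k * (q.choose k : ℤ)) = 0 :=
        Int.alternating_sum_range_choose_of_ne (by omega)
      have hz' := congrArg (Int.cast : ℤ → R) hz
      push_cast at hz'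
      rw [hz', if_neg (by omega)]
    · rw [if_pos (by omega), ← sum_filter]
      have hf : (range (q + 1)).filter (fun k => m + k ≤ p) = range (p - m + 1) := by
        ext k
        simp only [mem_filter, mem_range]
        omega
      rw [hf, alt_partial_sum R q (p - m) hq]
  · rw [if_neg (by omega)]
    exact sum_eq_zero fun k hk => if_neg (by omega)

private lemma reindex_lemma (R : Type*) [CommRing R] (q p : ℕ) (hq : 1 ≤ q)
    (a : Fin q → ℕ → R) (ha : ∀ l, a l 0 = 0) (t : Finset (Fin q)) :
    ∑ i ∈ ((Fintype.piFinset fun _ : Fin q => range (p + 1)).filter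
        (fun i => (∀ l, 1 ≤ i l) ∧ q ≤ ∑ l, i l ∧ ∑ l, i l ≤ p)),
      ∏ l, a l (i l - (if l ∈ t then 1 else 0))
    = ∑ j ∈ ((Fintype.piFinset fun _ : Fin q => range (p + 1)).filter
        (fun j => (∀ l, 1 ≤ j l) ∧ q ≤ (∑ l, j l) + #t ∧ (∑ l, j l) + #t ≤ p)),
      ∏ l, a l (j l) := by
  classical
  set e : Fin q → ℕ := fun l => if l ∈ t then 1 else 0 with he
  have he1 : ∀ l, e l ≤ 1 := fun l => by simp only [he]; split <;> omega
  have hesum : ∑ l, e l = #t := by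
    simp only [he]
    rw [Finset.sum_ite_mem]
    simp
  have hstep : ∑ i ∈ ((Fintype.piFinset fun _ : Fin q => range (p + 1)).filter
        (fun i => (∀ l, 1 ≤ i l) ∧ q ≤ ∑ l, i l ∧ ∑ l, i l ≤ p)),
      ∏ l, a l (i l - e l)
      = ∑ i ∈ ((Fintype.piFinset fun _ : Fin q => range (p + 1)).filter
        (fun i => (∀ l, e l < i l) ∧ q ≤ ∑ l, i l ∧ ∑ l, i l ≤ p)),
      ∏ l, a l (i l - e l) := by
    refine (sum_subset ?_ ?_).symm
    · intro i hi
      simp only [mem_filter] at hi ⊢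
      refine ⟨hi.1, fun l => ?_, hi.2.2⟩
      have := hi.2.1 l
      omega
    · intro i hi hni
      simp only [mem_filter] at hi hni
      have : ∃ l, ¬ e l < i l := by
        by_contra hc
        push_neg at hc
        exact hni ⟨hi.1, hc, hi.2.2⟩
      obtain ⟨l, hl⟩ := this
      refine Finset.prod_eq_zero (mem_univ l) ?_
      have h1 := hi.2.1 l
      have : i l - e l = 0 := by have := he1 l; omega
      rw [this, ha]
  rw [hstep]
  refine Finset.sum_nbij' (fun i l => i l - e l) (fun j l => j l + e l) ?_ ?_ ?_ ?_ ?_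
  · intro i hi
    simp only [mem_filter, Fintype.mem_piFinset, mem_range] at hi ⊢
    obtain ⟨hbox, hlt, hge, hle⟩ := hi
    have hsub : ∑ l, (i l - e l) = (∑ l, i l) - ∑ l, e l :=
      Finset.sum_tsub_distrib _ (fun l _ => le_of_lt (hlt l))
    have hts : ∑ l, e l ≤ ∑ l, i l :=
      Finset.sum_le_sum fun l _ => le_of_lt (hlt l)
    refine ⟨fun l => by have := hbox l; omega, fun l => by have := hlt l; omega, ?_, ?_⟩
    · simp only [hsub, hesum]
      rw [hesum] at hts
      omega
    · simp only [hsub, hesum]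
      rw [hesum] at hts
      omega
  · intro j hj
    simp only [mem_filter, Fintype.mem_piFinset, mem_range] at hj ⊢
    obtain ⟨hbox, h1, hge, hle⟩ := hj
    have hadd : ∑ l, (j l + e l) = (∑ l, j l) + #t := by
      rw [Finset.sum_add_distrib, hesum]
    have hsingle : ∀ l, j l + e l ≤ (∑ l, j l) + #t := by
      intro l
      rw [← hadd]
      exact Finset.single_le_sum (f := fun l => j l + e l) (fun _ _ => Nat.zero_le _) (mem_univ l)
    refine ⟨fun l => by have := hsingle l; omega,
      fun l => by have := h1 l; have := he1 l; omega, ?_, ?_⟩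
    · simp only [hadd]; exact hge
    · simp only [hadd]; exact hle
  · intro i hi
    simp only [mem_filter] at hi
    funext l
    have := hi.2.1 l
    show i l - e l + e l = i l
    omega
  · intro j hj
    funext l
    show j l + e l - e l = j l
    omega
  · intro i hi
    rfl


/-- Smolyak combination identity: for scalars `a l i` in a commutative ring
with `a l 0 = 0`, and differences `d l i = a l i − a l (i−1)`, the sparse sum
of products of differences over multi-indices `i` (all components `≥ 1`,
`q ≤ |i|₁ ≤ p`) equals the combination-technique sum
`∑_{p−q < |i|₁ ≤ p} (−1)^{p−|i|₁} C(q−1, p−|i|₁) ∏ a l (i l)`.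
This is the scalar identity underlying the equivalence of formulas (3.3)
and (3.4) for the sparse grid interpolation operator. -/
theorem smolyak_combination_identity
    (R : Type*) [CommRing R] (q p : ℕ) (hq : 1 ≤ q) (hpq : q ≤ p)
    (a : Fin q → ℕ → R) (ha : ∀ l, a l 0 = 0) :
    ∑ i ∈ (Fintype.piFinset fun _ : Fin q => Finset.range (p + 1)) |>.filter
        (fun i => (∀ l, 1 ≤ i l) ∧ q ≤ ∑ l, i l ∧ ∑ l, i l ≤ p),
      ∏ l, (a l (i l) - a l (i l - 1))
    = ∑ i ∈ (Fintype.piFinset fun _ : Fin q => Finset.range (p + 1)) |>.filter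
        (fun i => (∀ l, 1 ≤ i l) ∧ p - q < ∑ l, i l ∧ ∑ l, i l ≤ p),
      (-1 : R) ^ (p - ∑ l, i l) * (Nat.choose (q - 1) (p - ∑ l, i l) : R)
        * ∏ l, a l (i l) := by
  classical
  have expand : ∀ i : Fin q → ℕ,
      ∏ l, (a l (i l) - a l (i l - 1)) =
      ∑ t ∈ (univ : Finset (Fin q)).powerset,
        (-1 : R) ^ (#t) * ∏ l, a l (i l - if l ∈ t then 1 else 0) := by
    intro i
    rw [prod_sub (fun l => a l (i l)) (fun l => a l (i l - 1)) univ]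
    refine sum_congr rfl fun t ht => ?_
    rw [mul_assoc]
    congr 1
    rw [← prod_sdiff (subset_univ t)]
    congr 1
    · exact prod_congr rfl fun l hl => by rw [if_neg (mem_sdiff.1 hl).2, Nat.sub_zero]
    · exact prod_congr rfl fun l hl => by rw [if_pos hl]
  rw [sum_congr rfl fun i _ => expand i, sum_comm]
  have step2 : ∀ t ∈ (univ : Finset (Fin q)).powerset,
      ∑ i ∈ ((Fintype.piFinset fun _ : Fin q => range (p + 1)).filter
          (fun i => (∀ l, 1 ≤ i l) ∧ q ≤ ∑ l, i l ∧ ∑ l, i l ≤ p)),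
        (-1 : R) ^ (#t) * ∏ l, a l (i l - if l ∈ t then 1 else 0)
      = (-1 : R) ^ (#t) *
        ∑ j ∈ ((Fintype.piFinset fun _ : Fin q => range (p + 1)).filter
          (fun j => (∀ l, 1 ≤ j l) ∧ q ≤ (∑ l, j l) + #t ∧ (∑ l, j l) + #t ≤ p)),
          ∏ l, a l (j l) := by
    intro t _
    rw [← mul_sum, reindex_lemma R q p hq a ha t]
  rw [sum_congr rfl step2]
  -- group subsets by cardinality
  have step3 : ∑ t ∈ (univ : Finset (Fin q)).powerset,
      ((-1 : R) ^ (#t) *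
        ∑ j ∈ ((Fintype.piFinset fun _ : Fin q => range (p + 1)).filter
          (fun j => (∀ l, 1 ≤ j l) ∧ q ≤ (∑ l, j l) + #t ∧ (∑ l, j l) + #t ≤ p)),
          ∏ l, a l (j l))
      = ∑ k ∈ range (q + 1), (q.choose k : R) *
        ((-1 : R) ^ k *
        ∑ j ∈ ((Fintype.piFinset fun _ : Fin q => range (p + 1)).filter
          (fun j => (∀ l, 1 ≤ j l) ∧ q ≤ (∑ l, j l) + k ∧ (∑ l, j l) + k ≤ p)),
          ∏ l, a l (j l)) := by
    rw [sum_powerset]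
    have hcard : #(univ : Finset (Fin q)) = q := by simp
    rw [hcard]
    refine sum_congr rfl fun k _ => ?_
    have := Finset.sum_powersetCard k (univ : Finset (Fin q)) (fun c =>
      (-1 : R) ^ c *
        ∑ j ∈ ((Fintype.piFinset fun _ : Fin q => range (p + 1)).filter
          (fun j => (∀ l, 1 ≤ j l) ∧ q ≤ (∑ l, j l) + c ∧ (∑ l, j l) + c ≤ p)),
          ∏ l, a l (j l))
    rw [this, hcard, nsmul_eq_mul]
  rw [step3]
  -- rewrite inner sums as sums over U with indicator
  have step4 : ∀ k ∈ range (q + 1),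
      (q.choose k : R) *
        ((-1 : R) ^ k *
        ∑ j ∈ ((Fintype.piFinset fun _ : Fin q => range (p + 1)).filter
          (fun j => (∀ l, 1 ≤ j l) ∧ q ≤ (∑ l, j l) + k ∧ (∑ l, j l) + k ≤ p)),
          ∏ l, a l (j l))
      = ∑ j ∈ ((Fintype.piFinset fun _ : Fin q => range (p + 1)).filter
          (fun j => ∀ l, 1 ≤ j l)),
          (if q ≤ (∑ l, j l) + k ∧ (∑ l, j l) + k ≤ p
            then (-1 : R) ^ k * (q.choose k : R) else 0) * ∏ l, a l (j l) := by
    intro k _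
    rw [← filter_filter, sum_filter, mul_sum, mul_sum]
    refine sum_congr rfl fun j _ => ?_
    split_ifs
    · ring
    · simp
  rw [sum_congr rfl step4, sum_comm]
  have step5 : ∀ j ∈ ((Fintype.piFinset fun _ : Fin q => range (p + 1)).filter
          (fun j => ∀ l, 1 ≤ j l)),
      ∑ k ∈ range (q + 1),
        (if q ≤ (∑ l, j l) + k ∧ (∑ l, j l) + k ≤ p
            then (-1 : R) ^ k * (q.choose k : R) else 0) * ∏ l, a l (j l)
      = (if p - q < ∑ l, j l ∧ ∑ l, j l ≤ p
          then (-1 : R) ^ (p - ∑ l, j l) * (((q - 1).choose (p - ∑ l, j l) : ℕ) : R)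
          else 0) * ∏ l, a l (j l) := by
    intro j hj
    have h1 : ∀ l, 1 ≤ j l := (mem_filter.1 hj).2
    have hm : q ≤ ∑ l, j l := by
      calc q = ∑ _l : Fin q, 1 := by simp
        _ ≤ ∑ l, j l := Finset.sum_le_sum fun l _ => h1 l
    rw [← sum_mul, coeff_lemma R q p (∑ l, j l) hq hpq hm]
  rw [sum_congr rfl step5]
  simp only [ite_mul, zero_mul]
  rw [← sum_filter, filter_filter]
end

section
/- For all integers q, p with 1 ≤ q ≤ p, Σ_{s = p−q+1}^{p} (−1)^{p−s} · C(q−1, p−s) · C(s−1, q−1) = 1, where C(n,r) denotes the binomial coefficient. (Here C(s−1, q−1) counts the multi-indices i ∈ ℤ_{≥1}^q with i_1 + ⋯ + i_q = s, so this identity expresses that the sparse grid combination-technique coefficients sum to 1, i.e., the combination formula reproduces constant functions.) -/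
open Finset

lemma sparse_aux : ∀ m n : ℕ, m ≤ n →
    ∑ j ∈ Finset.range (m + 1),
      (-1 : ℤ) ^ j * (Nat.choose m j : ℤ) * (Nat.choose (n - j) m : ℤ) = 1 := by
  intro m
  induction m with
  | zero => intro n _; simp
  | succ m ih =>
    intro n hn
    have hT : ∑ j ∈ Finset.range (m + 1),
        (-1 : ℤ) ^ j * (Nat.choose m j : ℤ) * (Nat.choose (n - j) (m + 1) : ℤ)
        = -(∑ k ∈ Finset.range m,
            (-1 : ℤ) ^ k * (Nat.choose m (k + 1) : ℤ) * (Nat.choose (n - 1 - k) (m + 1) : ℤ))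
          + (Nat.choose n (m + 1) : ℤ) := by
      rw [Finset.sum_range_succ']
      simp only [pow_succ, Nat.choose_zero_right]
      rw [← Finset.sum_neg_distrib]
      congr 1
      · apply Finset.sum_congr rfl
        intro k hk
        have : n - (k + 1) = n - 1 - k := by omega
        rw [this]; ring
      · simp
    have hW : ∑ k ∈ Finset.range (m + 1),
        (-1 : ℤ) ^ k * (Nat.choose m (k + 1) : ℤ) * (Nat.choose (n - 1 - k) (m + 1) : ℤ)
        = ∑ k ∈ Finset.range m,
        (-1 : ℤ) ^ k * (Nat.choose m (k + 1) : ℤ) * (Nat.choose (n - 1 - k) (m + 1) : ℤ) := by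
      rw [Finset.sum_range_succ, Nat.choose_succ_self]
      simp
    -- main computation
    rw [Finset.sum_range_succ']
    have hsplit : ∀ k ∈ Finset.range (m + 1),
        (-1 : ℤ) ^ (k + 1) * (Nat.choose (m + 1) (k + 1) : ℤ)
          * (Nat.choose (n - (k + 1)) (m + 1) : ℤ)
        = -((-1 : ℤ) ^ k * (Nat.choose m k : ℤ) * (Nat.choose (n - 1 - k) (m + 1) : ℤ))
          + -((-1 : ℤ) ^ k * (Nat.choose m (k + 1) : ℤ) * (Nat.choose (n - 1 - k) (m + 1) : ℤ)) := by
      intro k hk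
      have h1 : n - (k + 1) = n - 1 - k := by omega
      rw [h1, Nat.choose_succ_succ]
      push_cast
      ring
    rw [Finset.sum_congr rfl hsplit, Finset.sum_add_distrib]
    simp only [Finset.sum_neg_distrib]
    rw [hW]
    have hTW : -(∑ k ∈ Finset.range m,
        (-1 : ℤ) ^ k * (Nat.choose m (k + 1) : ℤ) * (Nat.choose (n - 1 - k) (m + 1) : ℤ))
        = (∑ j ∈ Finset.range (m + 1),
            (-1 : ℤ) ^ j * (Nat.choose m j : ℤ) * (Nat.choose (n - j) (m + 1) : ℤ))
          - (Nat.choose n (m + 1) : ℤ) := by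
      rw [hT]; ring
    rw [hTW]
    have hU : ∑ k ∈ Finset.range (m + 1),
        (-1 : ℤ) ^ k * (Nat.choose m k : ℤ) * (Nat.choose (n - k) (m + 1) : ℤ)
        - ∑ k ∈ Finset.range (m + 1),
        (-1 : ℤ) ^ k * (Nat.choose m k : ℤ) * (Nat.choose (n - 1 - k) (m + 1) : ℤ)
        = ∑ k ∈ Finset.range (m + 1),
        (-1 : ℤ) ^ k * (Nat.choose m k : ℤ) * (Nat.choose (n - 1 - k) m : ℤ) := by
      rw [← Finset.sum_sub_distrib]
      apply Finset.sum_congr rfl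
      intro k hk
      have hk' : k < m + 1 := Finset.mem_range.mp hk
      have h1 : n - k = (n - 1 - k) + 1 := by omega
      rw [h1, Nat.choose_succ_succ]
      push_cast
      ring
    have hih := ih (n - 1) (by omega)
    have hihn : ∀ k ∈ Finset.range (m + 1),
        (-1 : ℤ) ^ k * (Nat.choose m k : ℤ) * (Nat.choose (n - 1 - k) m : ℤ)
        = (-1 : ℤ) ^ k * (Nat.choose m k : ℤ) * (Nat.choose ((n-1) - k) m : ℤ) := by
      intro k _; rfl
    simp only [pow_zero, Nat.choose_zero_right, Nat.cast_one, Nat.sub_zero, one_mul, mul_one]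
    linarith [hU, hih]

/-- The sparse grid combination-technique coefficients sum to one: for
`1 ≤ q ≤ p`, `∑_{s=p−q+1}^{p} (−1)^{p−s} C(q−1, p−s) C(s−1, q−1) = 1`,
where `C(s−1, q−1)` counts the multi-indices `i ∈ ℤ_{≥1}^q` with
`i_1 + ⋯ + i_q = s`; i.e. the combination formula reproduces constants. -/
theorem sparse_grid_combination_coefficients_sum_to_one
    (q p : ℕ) (hq : 1 ≤ q) (hpq : q ≤ p) :
    ∑ s ∈ Finset.Icc (p - q + 1) p,
      (-1 : ℤ) ^ (p - s) * (Nat.choose (q - 1) (p - s) : ℤ)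
        * (Nat.choose (s - 1) (q - 1) : ℤ) = 1 := by
  have key := sparse_aux (q - 1) (p - 1) (by omega)
  rw [show q - 1 + 1 = q from by omega] at key
  refine Eq.trans (Finset.sum_nbij' (fun s => p - s) (fun j => p - j) ?_ ?_ ?_ ?_ ?_) key
  · intro s hs
    simp only [Finset.mem_Icc] at hs
    simp only [Finset.mem_range]
    omega
  · intro j hj
    simp only [Finset.mem_range] at hj
    simp only [Finset.mem_Icc]
    omega
  · intro s hs
    simp only [Finset.mem_Icc] at hs
    show p - (p - s) = s
    omega
  · intro j hj
    simp only [Finset.mem_range] at hj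
    show p - (p - j) = j
    omega
  · intro s hs
    simp only [Finset.mem_Icc] at hs
    rw [show p - 1 - (p - s) = s - 1 from by omega]
end

section
/- For every natural number n, the Hermite polynomial of degree n has exactly n distinct real roots; that is, there exist n pairwise distinct real numbers x_1 < x_2 < ⋯ < x_n such that the degree-n Hermite polynomial vanishes at each x_j. (This justifies the definition of the one-dimensional Gauss–Hermite grid of level i as the 2^i − 1 roots of the Hermite polynomial of degree 2^i − 1.) -/
/-!
`deriv^[n]` of the Gaussian `exp (-x²/2)` is `(-1)ⁿ Heₙ(x) exp (-x²/2)`, so it has the same real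
zeros as `Heₙ`. These derivatives are continuous and tend to `0` at `±∞`, so Rolle's theorem
applies not only between consecutive zeros of the `n`-th derivative but also on the two unbounded
intervals beyond them: `n` zeros produce `n + 1` interlacing zeros of the next derivative.
-/

open Polynomial Filter Set Topology

namespace IsClosed

variable {X α : Type*} [TopologicalSpace X] [TopologicalSpace α] [LinearOrder α]
  [OrderClosedTopology α] {f : X → α} {s : Set X} {l : α}

theorem exists_isLocalMax_of_tendsto (hs : IsClosed s) (hf : ContinuousOn f s)
    (hbd : ∀ x ∈ s \ interior s, f x = l) (hlim : Tendsto f (cocompact X ⊓ 𝓟 s) (𝓝 l))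
    {x₀ : X} (hx₀ : x₀ ∈ s) (hlt : l < f x₀) : ∃ c ∈ interior s, IsLocalMax f c := by
  obtain ⟨c, hcs, hc⟩ := hf.exists_isMaxOn' hs hx₀ (hlim.eventually_le_const hlt)
  have hc_int : c ∈ interior s := by
    by_contra hc_bd
    exact (hlt.trans_le (hc hx₀)).ne' (hbd c ⟨hcs, hc_bd⟩)
  exact ⟨c, hc_int, hc.isLocalMax (mem_interior_iff_mem_nhds.1 hc_int)⟩

theorem exists_isLocalExtr_of_tendsto (hs : IsClosed s) (hf : ContinuousOn f s)
    (hne : (interior s).Nonempty) (hbd : ∀ x ∈ s \ interior s, f x = l)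
    (hlim : Tendsto f (cocompact X ⊓ 𝓟 s) (𝓝 l)) : ∃ c ∈ interior s, IsLocalExtr f c := by
  by_cases hgt : ∃ x ∈ s, l < f x
  · obtain ⟨x₀, hx₀, hlt⟩ := hgt
    obtain ⟨c, hc, hmax⟩ := hs.exists_isLocalMax_of_tendsto hf hbd hlim hx₀ hlt
    exact ⟨c, hc, Or.inr hmax⟩
  by_cases hlt : ∃ x ∈ s, f x < l
  · obtain ⟨x₀, hx₀, hlt⟩ := hlt
    obtain ⟨c, hc, hmin⟩ := hs.exists_isLocalMax_of_tendsto (α := αᵒᵈ) hf hbd hlim hx₀ hlt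
    exact ⟨c, hc, Or.inl hmin⟩
  push Not at hgt hlt
  obtain ⟨c, hc⟩ := hne
  refine ⟨c, hc, IsMinFilter.isExtr ?_⟩
  filter_upwards [mem_interior_iff_mem_nhds.1 hc] with y hy
  exact (hgt c (interior_subset hc)).trans (hlt y hy)

end IsClosed

section Rolle

variable {f : ℝ → ℝ} {a l : ℝ}

theorem exists_deriv_eq_zero_of_tendsto_cocompact (hf : Continuous f)
    (hlim : Tendsto f (cocompact ℝ) (𝓝 l)) : ∃ c, deriv f c = 0 := by
  obtain ⟨c, -, hc⟩ := isClosed_univ.exists_isLocalExtr_of_tendsto hf.continuousOn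
    (by simp) (by simp) (by rwa [principal_univ, inf_top_eq])
  exact ⟨c, hc.deriv_eq_zero⟩

theorem exists_deriv_eq_zero_Ioi (hf : ContinuousOn f (Ici a)) (hfa : f a = l)
    (hlim : Tendsto f atTop (𝓝 l)) : ∃ c > a, deriv f c = 0 := by
  have hlim' : Tendsto f (cocompact ℝ ⊓ 𝓟 (Ici a)) (𝓝 l) := by
    rw [cocompact_eq_atBot_atTop, inf_sup_right, (disjoint_atBot_principal_Ici a).eq_bot,
      bot_sup_eq]
    exact hlim.mono_left inf_le_left
  obtain ⟨c, hc, hextr⟩ := isClosed_Ici.exists_isLocalExtr_of_tendsto hf (by simp)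
    (by simpa using hfa) hlim'
  exact ⟨c, by simpa using hc, hextr.deriv_eq_zero⟩

theorem exists_deriv_eq_zero_Iio (hf : ContinuousOn f (Iic a)) (hfa : f a = l)
    (hlim : Tendsto f atBot (𝓝 l)) : ∃ c < a, deriv f c = 0 := by
  have hlim' : Tendsto f (cocompact ℝ ⊓ 𝓟 (Iic a)) (𝓝 l) := by
    rw [cocompact_eq_atBot_atTop, inf_sup_right, (disjoint_atTop_principal_Iic a).eq_bot,
      sup_bot_eq]
    exact hlim.mono_left inf_le_left
  obtain ⟨c, hc, hextr⟩ := isClosed_Iic.exists_isLocalExtr_of_tendsto hf (by simp)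
    (by simpa using hfa) hlim'
  exact ⟨c, by simpa using hc, hextr.deriv_eq_zero⟩

end Rolle

theorem exists_deriv_eq_zero_interlacing {f : ℝ → ℝ} {l : ℝ} (hf : Continuous f)
    (hlim : Tendsto f (cocompact ℝ) (𝓝 l)) {n : ℕ} {x : Fin n → ℝ} (hx : StrictMono x)
    (hfx : ∀ j, f (x j) = l) :
    ∃ y : Fin (n + 1) → ℝ, (∀ i, deriv f (y i) = 0) ∧ ∀ j, y j.castSucc < x j ∧ x j < y j.succ := by
  -- `c` is a critical point in the `i`-th gap `(x (i - 1), x i)`; the first and last are unbounded.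
  suffices h : ∀ i, ∃ c, deriv f c = 0 ∧ ∀ j, (j.castSucc = i → c < x j) ∧ (j.succ = i → x j < c) by
    choose y hy using h
    exact ⟨y, fun i => (hy i).1, fun j => ⟨((hy _).2 j).1 rfl, ((hy _).2 j).2 rfl⟩⟩
  intro i
  rcases n with _ | m
  · obtain ⟨c, hc⟩ := exists_deriv_eq_zero_of_tendsto_cocompact hf hlim
    exact ⟨c, hc, fun j => j.elim0⟩
  induction i using Fin.cases with
  | zero =>
    obtain ⟨c, hc, hdc⟩ := exists_deriv_eq_zero_Iio hf.continuousOn (hfx 0)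
      (hlim.mono_left atBot_le_cocompact)
    refine ⟨c, hdc, fun j => ⟨fun hj => ?_, fun hj => absurd hj (Fin.succ_ne_zero j)⟩⟩
    rw [Fin.castSucc_eq_zero_iff] at hj
    exact hj ▸ hc
  | succ k =>
    induction k using Fin.lastCases with
    | last =>
      obtain ⟨c, hc, hdc⟩ := exists_deriv_eq_zero_Ioi hf.continuousOn (hfx (Fin.last m))
        (hlim.mono_left atTop_le_cocompact)
      refine ⟨c, hdc, fun j => ⟨fun hj => ?_, fun hj => ?_⟩⟩
      · exact absurd hj (Fin.castSucc_ne_last j)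
      · rw [Fin.succ_inj] at hj
        exact hj ▸ hc
    | cast k =>
      obtain ⟨c, ⟨hkc, hck⟩, hdc⟩ := exists_deriv_eq_zero (hx k.castSucc_lt_succ) hf.continuousOn
        ((hfx _).trans (hfx _).symm)
      refine ⟨c, hdc, fun j => ⟨fun hj => ?_, fun hj => ?_⟩⟩
      · rw [Fin.succ_castSucc, Fin.castSucc_inj] at hj
        exact hj ▸ hck
      · rw [Fin.succ_inj] at hj
        exact hj ▸ hkc

theorem tendsto_eval_mul_exp_neg_mul_sq_cocompact (p : ℝ[X]) {a : ℝ} (ha : 0 < a) :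
    Tendsto (fun x => p.eval x * Real.exp (-a * x ^ 2)) (cocompact ℝ) (𝓝 0) := by
  have hmonomial (i : ℕ) :
      Tendsto (fun x : ℝ => x ^ i * Real.exp (-a * x ^ 2)) (cocompact ℝ) (𝓝 0) := by
    rw [tendsto_zero_iff_norm_tendsto_zero]
    simpa [abs_mul, Real.abs_exp] using tendsto_rpow_abs_mul_exp_neg_mul_sq_cocompact ha i
  simpa [eval_eq_sum_range, Finset.sum_mul, mul_assoc] using
    tendsto_finsetSum _ fun i _ => (hmonomial i).const_mul (p.coeff i)

section Gaussian

open Real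

lemma iterate_deriv_gaussian_eq_zero_iff (n : ℕ) (x : ℝ) :
    deriv^[n] (fun y => exp (-(y ^ 2 / 2))) x = 0 ↔ aeval x (hermite n) = 0 := by
  simp [deriv_gaussian_eq_hermite_mul_gaussian, exp_ne_zero]

lemma continuous_iterate_deriv_gaussian (n : ℕ) :
    Continuous (deriv^[n] (fun y : ℝ => exp (-(y ^ 2 / 2)))) := by
  rw [funext (deriv_gaussian_eq_hermite_mul_gaussian n)]
  fun_prop

lemma tendsto_iterate_deriv_gaussian_cocompact (n : ℕ) :
    Tendsto (deriv^[n] (fun y : ℝ => exp (-(y ^ 2 / 2)))) (cocompact ℝ) (𝓝 0) := by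
  have h := (tendsto_eval_mul_exp_neg_mul_sq_cocompact
    (C ((-1 : ℝ) ^ n) * (hermite n).map (algebraMap ℤ ℝ)) one_half_pos)
  refine h.congr fun x => ?_
  rw [deriv_gaussian_eq_hermite_mul_gaussian, eval_mul, eval_C, eval_map, ← aeval_def]
  ring_nf

lemma exists_strictMono_iterate_deriv_gaussian_eq_zero (n : ℕ) :
    ∃ x : Fin n → ℝ, StrictMono x ∧ ∀ j, deriv^[n] (fun y => exp (-(y ^ 2 / 2))) (x j) = 0 := by
  induction n with
  | zero => exact ⟨Fin.elim0, fun i => i.elim0, fun j => j.elim0⟩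
  | succ n ih =>
    obtain ⟨x, hx, hzero⟩ := ih
    obtain ⟨y, hy, hxy⟩ := exists_deriv_eq_zero_interlacing (continuous_iterate_deriv_gaussian n)
      (tendsto_iterate_deriv_gaussian_cocompact n) hx hzero
    refine ⟨y, Fin.strictMono_iff_lt_succ.2 fun j => (hxy j).1.trans (hxy j).2, fun i => ?_⟩
    rw [Function.iterate_succ_apply']
    exact hy i

end Gaussian

/-- The Hermite polynomial of degree `n` has exactly `n` distinct real roots:
there exist `n` strictly increasing real numbers at which it vanishes.
(This justifies defining the one-dimensional Gauss–Hermite grid of level `i`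
as the `2^i − 1` roots of the Hermite polynomial of degree `2^i − 1`.) -/
theorem hermite_has_n_distinct_real_roots (n : ℕ) :
    ∃ x : Fin n → ℝ, StrictMono x ∧
      ∀ j : Fin n, (Polynomial.aeval (x j)) (Polynomial.hermite n) = 0 := by
  obtain ⟨x, hx, hzero⟩ := exists_strictMono_iterate_deriv_gaussian_eq_zero n
  exact ⟨x, hx, fun j => (iterate_deriv_gaussian_eq_zero_iff n (x j)).1 (hzero j)⟩
end
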